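/- In the explosive PAR(1) model with |φ| > 1, the discrepancy satisfies X_{nP+r} - φ^n A_1^r (X_0 + ζ) = U_n^{(r)} - A_1^r ∑_{l=0}^{∞} φ^{-l-1} U_{n+l}^{(P)} for each n and r = 1,…,P (the series converging a.s. and in L²). -/

import Mathlib

/-!
Iterating the recursion over one period gives `X_{nP+r} = A_1^r X_{nP} + U_n^{(r)}`, in particular
`X_{(n+1)P} = φ X_{nP} + U_n^{(P)}`, so `X_{nP} = φ^n (X_0 + Z_{n-1})`. Subtracting
`φ^n A_1^r (X_0 + ζ)` leaves `U_n^{(r)} + A_1^r φ^n (Z_{n-1} - ζ)`, and `φ^n (Z_{n-1} - ζ)` is minus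
the shifted tail series. Since the noise is periodically distributed, `‖U_n^{(P)}‖_{L²}` is bounded
in `n`, so the terms of the tail series have geometrically decaying `L²` norms: the series converges
absolutely a.s., and its partial sums converge in `L²` by Fatou's lemma.
-/

open MeasureTheory Filter Topology
open Finset ProbabilityTheory
open scoped ENNReal

section LinearRecurrence

variable {R : Type*} [CommSemiring R] {x c v : ℕ → R}

theorem linear_recurrence_add (hrec : ∀ k, x (k + 1) = c (k + 1) * x k + v (k + 1)) (b r : ℕ) :
    x (b + r) = (∏ j ∈ Icc 1 r, c (b + j)) * x b
      + ∑ s ∈ Icc 1 r, (∏ j ∈ Icc (s + 1) r, c (b + j)) * v (b + s) := by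
  induction r with
  | zero => simp
  | succ r ih =>
    have hlast : ∏ j ∈ Icc (r + 1 + 1) (r + 1), c (b + j) = 1 := by
      rw [Icc_eq_empty (by omega), prod_empty]
    have hprod : ∀ s ∈ Icc 1 r,
        ∏ j ∈ Icc (s + 1) (r + 1), c (b + j) = (∏ j ∈ Icc (s + 1) r, c (b + j)) * c (b + r + 1) :=
      fun s hs => prod_Icc_succ_top (by grind) _
    rw [← add_assoc, hrec, ih, prod_Icc_succ_top (by omega), sum_Icc_succ_top (by omega), hlast,
      sum_congr rfl fun s hs => congrArg (· * v (b + s)) (hprod s hs), mul_add, mul_sum]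
    simp only [add_assoc, mul_comm, mul_left_comm, one_mul]

end LinearRecurrence

theorem eq_pow_mul_add_sum_of_succ {K : Type*} [Field K] {φ : K} (hφ : φ ≠ 0) {y w : ℕ → K}
    (hy : ∀ m, y (m + 1) = φ * y m + w m) (m : ℕ) :
    y m = φ ^ m * (y 0 + ∑ l ∈ range m, (φ ^ (l + 1))⁻¹ * w l) := by
  induction m with
  | zero => simp
  | succ m ih =>
    rw [hy, ih, sum_range_succ]
    field_simp
    ring

section Tail

variable {K : Type*} [Field K] {φ : K} {w : ℕ → K}

theorem inv_pow_mul_nat_add (hφ : φ ≠ 0) (n l : ℕ) :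
    (φ ^ (l + 1))⁻¹ * w (n + l) = φ ^ n * ((φ ^ (l + n + 1))⁻¹ * w (l + n)) := by
  rw [add_comm n l]
  field_simp
  ring

variable [TopologicalSpace K] [IsTopologicalRing K]

theorem summable_inv_pow_mul_nat_add (hφ : φ ≠ 0) (hw : Summable fun l => (φ ^ (l + 1))⁻¹ * w l)
    (n : ℕ) : Summable fun l => (φ ^ (l + 1))⁻¹ * w (n + l) := by
  simp_rw [inv_pow_mul_nat_add hφ n]
  exact ((summable_nat_add_iff n).mpr hw).mul_left _

theorem tsum_inv_pow_mul_nat_add [T2Space K] (hφ : φ ≠ 0)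
    (hw : Summable fun l => (φ ^ (l + 1))⁻¹ * w l) (n : ℕ) : ∑' l, (φ ^ (l + 1))⁻¹ * w (n + l)
      = φ ^ n * (∑' l, (φ ^ (l + 1))⁻¹ * w l - ∑ l ∈ range n, (φ ^ (l + 1))⁻¹ * w l) := by
  simp_rw [inv_pow_mul_nat_add hφ n, tsum_mul_left, ← hw.sum_add_tsum_nat_add n,
    add_sub_cancel_left]

end Tail

/-- `U_n^{(r)}` of the PAR(1) model driven by the noise `v`. -/
def parNoise (a v : ℕ → ℝ) (P n r : ℕ) : ℝ :=
  ∑ s ∈ Icc 1 r, (∏ j ∈ Icc (s + 1) r, a j) * v (n * P + s)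

section PAR

variable {a x v : ℕ → ℝ} {P : ℕ} {φ : ℝ}

theorem par_mul_add (hper : Function.Periodic a P)
    (hrec : ∀ k, x (k + 1) = a (k + 1) * x k + v (k + 1)) (n r : ℕ) :
    x (n * P + r) = (∏ j ∈ Icc 1 r, a j) * x (n * P) + parNoise a v P n r := by
  have hshift : ∀ j, a (n * P + j) = a j := fun j => by rw [add_comm]; exact hper.nat_mul n j
  rw [parNoise]
  simpa only [hshift] using linear_recurrence_add hrec (n * P) r

theorem par_mul (hper : Function.Periodic a P) (hφ : ∏ j ∈ Icc 1 P, a j = φ) (hφ0 : φ ≠ 0)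
    (hrec : ∀ k, x (k + 1) = a (k + 1) * x k + v (k + 1)) (n : ℕ) :
    x (n * P) = φ ^ n * (x 0 + ∑ l ∈ range n, (φ ^ (l + 1))⁻¹ * parNoise a v P l P) := by
  have hstep : ∀ m, x ((m + 1) * P) = φ * x (m * P) + parNoise a v P m P := fun m => by
    rw [add_one_mul, par_mul_add hper hrec, hφ]
  simpa only [zero_mul] using eq_pow_mul_add_sum_of_succ (y := fun n => x (n * P)) hφ0 hstep n

theorem par_discrepancy (hper : Function.Periodic a P) (hφ : ∏ j ∈ Icc 1 P, a j = φ)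
    (hφ0 : φ ≠ 0) (hrec : ∀ k, x (k + 1) = a (k + 1) * x k + v (k + 1))
    (hsum : Summable fun l => (φ ^ (l + 1))⁻¹ * parNoise a v P l P) (n r : ℕ) :
    x (n * P + r) - φ ^ n * (∏ j ∈ Icc 1 r, a j)
        * (x 0 + ∑' l, (φ ^ (l + 1))⁻¹ * parNoise a v P l P)
      = parNoise a v P n r
        - (∏ j ∈ Icc 1 r, a j) * ∑' l, (φ ^ (l + 1))⁻¹ * parNoise a v P (n + l) P := by
  rw [par_mul_add hper hrec, par_mul hper hφ hφ0 hrec,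
    tsum_inv_pow_mul_nat_add (w := fun l => parNoise a v P l P) hφ0 hsum]
  ring

end PAR

section Lp

variable {α E : Type*} {m : MeasurableSpace α} {μ : Measure α} {p : ℝ≥0∞}
  [NormedAddCommGroup E] {f : ℕ → α → E}

theorem eLpNorm_tsum_le (hp : 1 ≤ p) (hf : ∀ l, AEStronglyMeasurable (f l) μ)
    (hsum : ∀ᵐ x ∂μ, Summable fun l => f l x) :
    eLpNorm (fun x => ∑' l, f l x) p μ ≤ ∑' l, eLpNorm (f l) p μ := by
  refine Lp.eLpNorm_le_of_ae_tendsto (f := fun n => ∑ l ∈ range n, f l) (u := atTop)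
    (Eventually.of_forall fun n => ?_) (fun n => aestronglyMeasurable_sum _ fun l _ => hf l) ?_
  · exact (eLpNorm_sum_le (fun l _ => hf l) hp).trans (ENNReal.sum_le_tsum _)
  · filter_upwards [hsum] with x hx
    simpa only [Finset.sum_apply] using hx.hasSum.tendsto_sum_nat

theorem ae_summable_of_tsum_eLpNorm_ne_top [CompleteSpace E] (hp : 1 ≤ p)
    (hf : ∀ l, AEStronglyMeasurable (f l) μ) (h : ∑' l, eLpNorm (f l) p μ ≠ ∞) :
    ∀ᵐ x ∂μ, Summable fun l => f l x :=
  (summable_norm_of_tsum_eLpNorm_ne_top hp hf h).mono fun _ hx => hx.of_norm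

theorem tendsto_eLpNorm_sum_range_sub_tsum [CompleteSpace E] (hp : 1 ≤ p)
    (hf : ∀ l, AEStronglyMeasurable (f l) μ) (h : ∑' l, eLpNorm (f l) p μ ≠ ∞) :
    Tendsto (fun n => eLpNorm (fun x => ∑ l ∈ range n, f l x - ∑' l, f l x) p μ) atTop
      (𝓝 0) := by
  have hsum := ae_summable_of_tsum_eLpNorm_ne_top hp hf h
  refine tendsto_of_tendsto_of_tendsto_of_le_of_le tendsto_const_nhds
    (ENNReal.tendsto_sum_nat_add _ h) (fun _ => zero_le) fun n => ?_
  calc eLpNorm (fun x => ∑ l ∈ range n, f l x - ∑' l, f l x) p μ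
      = eLpNorm (fun x => ∑' l, f (l + n) x) p μ := by
        rw [← eLpNorm_neg]
        refine eLpNorm_congr_ae ?_
        filter_upwards [hsum] with x hx
        rw [Pi.neg_apply, neg_sub, ← hx.sum_add_tsum_nat_add n, add_sub_cancel_left]
    _ ≤ ∑' l, eLpNorm (f (l + n)) p μ :=
        eLpNorm_tsum_le hp (fun l => hf _)
          (hsum.mono fun _ hx => (summable_nat_add_iff n).mpr hx)

theorem integral_sq_eq_toReal_eLpNorm_sq {g : α → ℝ} (hg : AEStronglyMeasurable g μ) :
    ∫ x, g x ^ 2 ∂μ = (eLpNorm g 2 μ).toReal ^ 2 := by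
  rw [integral_eq_lintegral_of_nonneg_ae (ae_of_all _ fun x => sq_nonneg (g x)) (hg.pow 2),
    ← ENNReal.toReal_pow]
  congr 1
  have := eLpNorm_nnreal_pow_eq_lintegral (f := g) (μ := μ) (p := 2) two_ne_zero
  simp only [NNReal.coe_ofNat, ENNReal.coe_ofNat] at this
  rw [← ENNReal.rpow_natCast, Nat.cast_ofNat, this]
  refine lintegral_congr fun x => ?_
  rw [Real.enorm_eq_ofReal_abs, ENNReal.ofReal_rpow_of_nonneg (abs_nonneg _) zero_le_two,
    Real.rpow_two, sq_abs]

theorem tendsto_integral_sq_sum_range_sub_tsum {f : ℕ → α → ℝ}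
    (hf : ∀ l, AEStronglyMeasurable (f l) μ) (h : ∑' l, eLpNorm (f l) 2 μ ≠ ∞) :
    Tendsto (fun n => ∫ x, (∑ l ∈ range n, f l x - ∑' l, f l x) ^ 2 ∂μ) atTop
      (𝓝 0) := by
  have hpartial : ∀ n, AEStronglyMeasurable (fun x => ∑ l ∈ range n, f l x) μ :=
    fun n => aestronglyMeasurable_fun_sum _ fun l _ => hf l
  have htsum : AEStronglyMeasurable (fun x => ∑' l, f l x) μ := by
    refine aestronglyMeasurable_of_tendsto_ae atTop hpartial ?_
    filter_upwards [ae_summable_of_tsum_eLpNorm_ne_top one_le_two hf h] with x hx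
    exact hx.hasSum.tendsto_sum_nat
  have hsq := ((ENNReal.tendsto_toReal ENNReal.zero_ne_top).comp
    (tendsto_eLpNorm_sum_range_sub_tsum one_le_two hf h)).pow 2
  simp only [Function.comp_def, ENNReal.toReal_zero, zero_pow two_ne_zero] at hsq
  refine hsq.congr fun n => ?_
  exact (integral_sq_eq_toReal_eLpNorm_sq ((hpartial n).sub htsum)).symm

theorem tsum_eLpNorm_inv_pow_mul_ne_top {g : ℕ → α → ℝ} {φ : ℝ} (hφ : 1 < |φ|) {C : ℝ≥0∞}
    (hC : C ≠ ∞) (hg : ∀ l, eLpNorm (g l) p μ ≤ C) :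
    ∑' l, eLpNorm (fun x => (φ ^ (l + 1))⁻¹ * g l x) p μ ≠ ∞ := by
  have hq : ‖φ⁻¹‖ₑ < 1 := by
    rw [← ofReal_norm, ENNReal.ofReal_lt_one, norm_inv]
    exact inv_lt_one_of_one_lt₀ hφ
  have hterm : ∀ l,
      eLpNorm (fun x => (φ ^ (l + 1))⁻¹ * g l x) p μ ≤ ‖φ⁻¹‖ₑ ^ (l + 1) * C := fun l => by
    rw [show (fun x => (φ ^ (l + 1))⁻¹ * g l x) = (φ ^ (l + 1))⁻¹ • g l from rfl,
      eLpNorm_const_smul, ← inv_pow, enorm_pow]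
    gcongr
    exact hg l
  refine ne_top_of_le_ne_top ?_ (ENNReal.tsum_le_tsum hterm)
  rw [ENNReal.tsum_mul_right, ENNReal.tsum_geometric_add_one]
  exact ENNReal.mul_ne_top (ENNReal.mul_ne_top (hq.trans ENNReal.one_lt_top).ne
    (ENNReal.inv_ne_top.mpr (tsub_pos_of_lt hq).ne')) hC

end Lp

section Noise

variable {Ω : Type*} [MeasurableSpace Ω] {μ : Measure Ω} {u : ℕ → Ω → ℝ} {P : ℕ}

theorem identDistrib_add_of_map_eq (humeas : ∀ k, Measurable (u k))
    (hpd : ∀ m : ℕ, Measure.map (fun ω => fun i : Fin m => u ((i : ℕ) + P) ω) μ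
      = Measure.map (fun ω => fun i : Fin m => u (i : ℕ) ω) μ) (k : ℕ) :
    IdentDistrib (u (k + P)) (u k) μ μ :=
  IdentDistrib.comp
    ⟨(measurable_pi_lambda _ fun _ => humeas _).aemeasurable,
      (measurable_pi_lambda _ fun _ => humeas _).aemeasurable, hpd (k + 1)⟩
    (measurable_pi_apply (Fin.last k))

theorem identDistrib_mul_add (hid : ∀ k, IdentDistrib (u (k + P)) (u k) μ μ) (n k : ℕ) :
    IdentDistrib (u (n * P + k)) (u k) μ μ := by
  induction n with
  | zero => simpa only [zero_mul, zero_add] using IdentDistrib.refl (hid k).aemeasurable_snd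
  | succ n ih =>
    rw [add_one_mul, add_right_comm]
    exact (hid _).trans ih

theorem measurable_parNoise (a : ℕ → ℝ) (humeas : ∀ k, Measurable (u k)) (n r : ℕ) :
    Measurable fun ω => parNoise a (u · ω) P n r :=
  Finset.measurable_sum _ fun _ _ => (humeas _).const_mul _

theorem eLpNorm_parNoise_le (a : ℕ → ℝ) {p : ℝ≥0∞} (hp : 1 ≤ p)
    (humeas : ∀ k, Measurable (u k)) (hid : ∀ k, IdentDistrib (u (k + P)) (u k) μ μ) (n r : ℕ) :
    eLpNorm (fun ω => parNoise a (u · ω) P n r) p μ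
      ≤ ∑ s ∈ Icc 1 r, ‖∏ j ∈ Icc (s + 1) r, a j‖ₑ * eLpNorm (u s) p μ := by
  have hsum : (fun ω => parNoise a (u · ω) P n r)
      = ∑ s ∈ Icc 1 r, (∏ j ∈ Icc (s + 1) r, a j) • u (n * P + s) := by
    ext ω
    simp only [parNoise, Finset.sum_apply, Pi.smul_apply, smul_eq_mul]
  rw [hsum]
  refine (eLpNorm_sum_le (fun s _ => ((humeas _).const_smul _).aestronglyMeasurable) hp).trans
    (sum_le_sum fun s _ => ?_)
  rw [eLpNorm_const_smul, (identDistrib_mul_add hid n s).eLpNorm_eq]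

end Noise

theorem stmt7_general {Ω : Type*} [MeasurableSpace Ω] (μ : Measure Ω)
    (P : ℕ) (a : ℕ → ℝ) (hper : ∀ k, a (k + P) = a k)
    (φ : ℝ) (hφdef : φ = ∏ j ∈ Finset.Icc 1 P, a j) (hφ : 1 < |φ|)
    (u : ℕ → Ω → ℝ) (humeas : ∀ k, Measurable (u k)) (huL2 : ∀ k, MemLp (u k) 2 μ)
    (hpd : ∀ m : ℕ,
      Measure.map (fun ω => fun i : Fin m => u ((i : ℕ) + P) ω) μ
        = Measure.map (fun ω => fun i : Fin m => u (i : ℕ) ω) μ)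
    (X : ℕ → Ω → ℝ)
    (hrec : ∀ k ω, X (k + 1) ω = a (k + 1) * X k ω + u (k + 1) ω)
    (U : ℕ → ℕ → Ω → ℝ)
    (hU : ∀ n r ω, U n r ω
      = ∑ s ∈ Finset.Icc 1 r, (∏ j ∈ Finset.Icc (s + 1) r, a j) * u (n * P + s) ω)
    (Z : ℕ → Ω → ℝ)
    (hZ : ∀ n ω, Z n ω = ∑ l ∈ Finset.range (n + 1), (φ ^ (l + 1))⁻¹ * U l P ω)
    (ζ : Ω → ℝ)
    (hζ : ∀ᵐ ω ∂μ, Tendsto (fun n => Z n ω) atTop (𝓝 (ζ ω))) :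
    ∀ n r : ℕ, 1 ≤ r → r ≤ P →
      (∀ᵐ ω ∂μ,
        Summable (fun l : ℕ => (φ ^ (l + 1))⁻¹ * U (n + l) P ω) ∧
        X (n * P + r) ω - φ ^ n * (∏ j ∈ Finset.Icc 1 r, a j) * (X 0 ω + ζ ω)
          = U n r ω
            - (∏ j ∈ Finset.Icc 1 r, a j) * ∑' l : ℕ, (φ ^ (l + 1))⁻¹ * U (n + l) P ω) ∧
      Tendsto (fun m => ∫ ω,
          (∑ l ∈ Finset.range m, (φ ^ (l + 1))⁻¹ * U (n + l) P ω
            - ∑' l : ℕ, (φ ^ (l + 1))⁻¹ * U (n + l) P ω) ^ 2 ∂μ)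
        atTop (𝓝 0) := by
  intro n r _ _
  have hφ0 : φ ≠ 0 := by rintro rfl; norm_num at hφ
  have hUeq : ∀ m r, U m r = fun ω => parNoise a (u · ω) P m r := fun m r => funext (hU m r)
  have hmeas : ∀ n l, AEStronglyMeasurable (fun ω => (φ ^ (l + 1))⁻¹ * U (n + l) P ω) μ :=
    fun n l => by
      rw [hUeq]
      exact ((measurable_parNoise a humeas _ _).const_mul _).aestronglyMeasurable
  have hnorm : ∀ n,
      ∑' l, eLpNorm (fun ω => (φ ^ (l + 1))⁻¹ * U (n + l) P ω) 2 μ ≠ ∞ := fun n =>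
    tsum_eLpNorm_inv_pow_mul_ne_top hφ
      (ENNReal.sum_ne_top.mpr fun s _ => ENNReal.mul_ne_top enorm_ne_top (huL2 s).eLpNorm_ne_top)
      fun l => by
        rw [hUeq]
        exact eLpNorm_parNoise_le a one_le_two humeas (identDistrib_add_of_map_eq humeas hpd) _ _
  refine ⟨?_, tendsto_integral_sq_sum_range_sub_tsum (hmeas n) (hnorm n)⟩
  filter_upwards [ae_summable_of_tsum_eLpNorm_ne_top one_le_two (hmeas 0) (hnorm 0), hζ]
    with ω hsum hZω
  simp only [zero_add] at hsum
  have hζω : ζ ω = ∑' l, (φ ^ (l + 1))⁻¹ * U l P ω := by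
    refine tendsto_nhds_unique hZω ?_
    simpa only [hZ, Function.comp_def] using
      hsum.hasSum.tendsto_sum_nat.comp (tendsto_add_atTop_nat 1)
  have hUω : ∀ m r, U m r ω = parNoise a (u · ω) P m r := fun m r => hU m r ω
  simp only [hζω, hUω] at hsum ⊢
  exact ⟨summable_inv_pow_mul_nat_add hφ0 hsum n,
    par_discrepancy (x := (X · ω)) hper hφdef.symm hφ0 (fun k => hrec k ω) hsum n r⟩

/-- discrepancy identity
X_{nP+r} - φ^n A_1^r (X_0 + ζ) = U_n^{(r)} - A_1^r ∑_{l=0}^∞ φ^{-l-1} U_{n+l}^{(P)},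
the series converging a.s. and in L². -/
theorem stmt7 {Ω : Type*} [MeasurableSpace Ω] (μ : Measure Ω) [IsProbabilityMeasure μ]
    (P : ℕ) (hP : 1 ≤ P) (a : ℕ → ℝ) (hper : ∀ k, a (k + P) = a k)
    (φ : ℝ) (hφdef : φ = ∏ j ∈ Finset.Icc 1 P, a j) (hφ : 1 < |φ|)
    (u : ℕ → Ω → ℝ) (humeas : ∀ k, Measurable (u k)) (huL2 : ∀ k, MemLp (u k) 2 μ)
    (hucent : ∀ k, ∫ ω, u k ω ∂μ = 0)
    (hpd : ∀ m : ℕ,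
      Measure.map (fun ω => fun i : Fin m => u ((i : ℕ) + P) ω) μ
        = Measure.map (fun ω => fun i : Fin m => u (i : ℕ) ω) μ)
    (X : ℕ → Ω → ℝ) (hX0 : MemLp (X 0) 2 μ)
    (hrec : ∀ k ω, X (k + 1) ω = a (k + 1) * X k ω + u (k + 1) ω)
    (U : ℕ → ℕ → Ω → ℝ)
    (hU : ∀ n r ω, U n r ω
      = ∑ s ∈ Finset.Icc 1 r, (∏ j ∈ Finset.Icc (s + 1) r, a j) * u (n * P + s) ω)
    (Z : ℕ → Ω → ℝ)
    (hZ : ∀ n ω, Z n ω = ∑ l ∈ Finset.range (n + 1), (φ ^ (l + 1))⁻¹ * U l P ω)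
    (ζ : Ω → ℝ)
    (hζ : ∀ᵐ ω ∂μ, Tendsto (fun n => Z n ω) atTop (𝓝 (ζ ω))) :
    ∀ n r : ℕ, 1 ≤ r → r ≤ P →
      (∀ᵐ ω ∂μ,
        Summable (fun l : ℕ => (φ ^ (l + 1))⁻¹ * U (n + l) P ω) ∧
        X (n * P + r) ω - φ ^ n * (∏ j ∈ Finset.Icc 1 r, a j) * (X 0 ω + ζ ω)
          = U n r ω
            - (∏ j ∈ Finset.Icc 1 r, a j) * ∑' l : ℕ, (φ ^ (l + 1))⁻¹ * U (n + l) P ω) ∧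
      Tendsto (fun m => ∫ ω,
          (∑ l ∈ Finset.range m, (φ ^ (l + 1))⁻¹ * U (n + l) P ω
            - ∑' l : ℕ, (φ ^ (l + 1))⁻¹ * U (n + l) P ω) ^ 2 ∂μ)
        atTop (𝓝 0) :=
  stmt7_general μ P a hper φ hφdef hφ u humeas huL2 hpd X hrec U hU Z hZ ζ hζ
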